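/- The convexity-correction operator Conv preserves convexity: given a slope sequence $z:\{0,\ldots,N\}\to\mathbb{R}$ that is nondecreasing except possibly at two updated indices $m$ and $m+1$ with $z(m)\le z(m+1)$, the corrected sequence defined by replacing $z(n)$ with $z(m)$ whenever $n<m$ and $z(n)>z(m)$, and with $z(m+1)$ whenever $n>m+1$ and $z(n)<z(m+1)$, is nondecreasing. -/

import Mathlib

/-!
Below `m` the correction caps `z` at `z m`, so there it is the pointwise minimum of `z` and a
constant, hence nondecreasing and bounded by `z m`; symmetrically, above `m + 1` it is the
pointwise maximum of `z` and `z (m + 1)`, nondecreasing and bounded below by `z (m + 1)`.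
The two halves fit together because `z m ≤ z (m + 1)`.
-/

open Set

theorem MonotoneOn.of_inter_Iic_of_inter_Ioi {α β : Type*} [LinearOrder α] [Preorder β]
    {f : α → β} {s : Set α} {a : α} (h₁ : MonotoneOn f (s ∩ Iic a))
    (h₂ : MonotoneOn f (s ∩ Ioi a)) (h : ∀ x ∈ s ∩ Iic a, ∀ y ∈ s ∩ Ioi a, f x ≤ f y) :
    MonotoneOn f s := by
  intro x hx y hy hxy
  rcases le_or_gt y a with hya | hay
  · exact h₁ ⟨hx, hxy.trans hya⟩ ⟨hy, hya⟩ hxy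
  rcases le_or_gt x a with hxa | hax
  · exact h x ⟨hx, hxa⟩ y ⟨hy, hay⟩
  · exact h₂ ⟨hx, hax⟩ ⟨hy, hay⟩ hxy

/-- The paper's operator `Conv`, applied after the slopes at `m` and `m + 1` were updated. -/
noncomputable def convCorrection (z : ℕ → ℝ) (m n : ℕ) : ℝ :=
  if n < m ∧ z m < z n then z m
  else if m + 1 < n ∧ z n < z (m + 1) then z (m + 1)
  else z n

namespace convCorrection

variable {z : ℕ → ℝ} {m n : ℕ}

theorem of_lt (hn : n < m) : convCorrection z m n = min (z n) (z m) := by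
  unfold convCorrection
  split_ifs <;> grind

theorem self : convCorrection z m m = z m := by
  unfold convCorrection
  split_ifs <;> grind

theorem succ_self : convCorrection z m (m + 1) = z (m + 1) := by
  unfold convCorrection
  split_ifs <;> grind

theorem of_gt (hn : m + 1 < n) : convCorrection z m n = max (z n) (z (m + 1)) := by
  unfold convCorrection
  split_ifs <;> grind

theorem le_of_le (hn : n ≤ m) : convCorrection z m n ≤ z m := by
  rcases hn.eq_or_lt with rfl | hn
  · exact self.le
  · exact (of_lt hn).trans_le (min_le_right _ _)

theorem le_of_succ_le (hn : m + 1 ≤ n) : z (m + 1) ≤ convCorrection z m n := by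
  rcases hn.eq_or_lt with rfl | hn
  · exact succ_self.ge
  · exact (le_max_right _ _).trans (of_gt hn).ge

theorem monotoneOn_inter_Iic {s : Set ℕ} (hz : MonotoneOn z (s ∩ Iio m)) :
    MonotoneOn (convCorrection z m) (s ∩ Iic m) := by
  intro i hi j hj hij
  rcases (show j ≤ m from hj.2).eq_or_lt with rfl | hjm
  · exact (le_of_le hi.2).trans self.ge
  · have him : i < m := hij.trans_lt hjm
    rw [of_lt him, of_lt hjm]
    exact min_le_min_right _ (hz ⟨hi.1, him⟩ ⟨hj.1, hjm⟩ hij)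

theorem monotoneOn_inter_Ioi {s : Set ℕ} (hz : MonotoneOn z (s ∩ Ioi (m + 1))) :
    MonotoneOn (convCorrection z m) (s ∩ Ioi m) := by
  intro i hi j hj hij
  rcases (Nat.succ_le_of_lt hi.2).eq_or_lt with rfl | him
  · exact succ_self.trans_le (le_of_succ_le hij)
  · have hjm : m + 1 < j := him.trans_le hij
    rw [of_gt him, of_gt hjm]
    exact max_le_max_right _ (hz ⟨hi.1, him⟩ ⟨hj.1, hjm⟩ hij)

theorem monotoneOn {s : Set ℕ} (hm : z m ≤ z (m + 1)) (hlow : MonotoneOn z (s ∩ Iio m))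
    (hup : MonotoneOn z (s ∩ Ioi (m + 1))) : MonotoneOn (convCorrection z m) s :=
  (monotoneOn_inter_Iic hlow).of_inter_Iic_of_inter_Ioi (monotoneOn_inter_Ioi hup)
    fun _ hx _ hy => (le_of_le hx.2).trans (hm.trans (le_of_succ_le hy.2))

end convCorrection

/-- The convexity-correction operator `Conv` preserves monotonicity of the slope sequence:
if `z : {0,…,N} → ℝ` is nondecreasing except possibly at the two updated indices `m`, `m+1`,
where `z m ≤ z (m+1)`, then the corrected sequence — replacing `z n` by `z m` whenever
`n < m` and `z n > z m`, and by `z (m+1)` whenever `n > m+1` and `z n < z (m+1)` — is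
nondecreasing on `{0,…,N}`. -/
theorem stmt_11 (N m : ℕ) (z : ℕ → ℝ)
    (hmono : ∀ i j, i ≤ j → j ≤ N → i ≠ m → i ≠ m + 1 → j ≠ m → j ≠ m + 1 → z i ≤ z j)
    (hm : z m ≤ z (m + 1))
    (w : ℕ → ℝ)
    (hw : ∀ n, w n =
      if n < m ∧ z m < z n then z m
      else if m + 1 < n ∧ z n < z (m + 1) then z (m + 1)
      else z n) :
    ∀ i j, i ≤ j → j ≤ N → w i ≤ w j := by
  obtain rfl : w = convCorrection z m := funext hw
  have hlow : MonotoneOn z (Iic N ∩ Iio m) := fun i hi j hj hij => by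
    simp only [mem_inter_iff, mem_Iic, mem_Iio] at hi hj
    exact hmono i j hij hj.1 (by omega) (by omega) (by omega) (by omega)
  have hup : MonotoneOn z (Iic N ∩ Ioi (m + 1)) := fun i hi j hj hij => by
    simp only [mem_inter_iff, mem_Iic, mem_Ioi] at hi hj
    exact hmono i j hij hj.1 (by omega) (by omega) (by omega) (by omega)
  intro i j hij hjN
  exact convCorrection.monotoneOn hm hlow hup (hij.trans hjN) hjN hij
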